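/- In a stochastic tree, let π be any policy and let R be a minimal implementation of π, i.e., a bonus function such that π is everywhere-optimal for R^A + R and such that ∑_{(s,a)} R(s,a) ≤ ∑_{(s,a)} R'(s,a) for every bonus function R' making π everywhere-optimal for R^A + R'. Then V_{s₀}(π, R^A + R) = V_{s₀}(π^A, R^A): under a minimal implementation, the agent's utility from the initial state with the bonus equals his optimal utility without any bonus. -/

import Mathlib

/-!
Let `M` be the optimal value without bonus and `W` the value of `π` under `R`, so `M ≤ W`.
Paying, at each non-terminal state `s` and for the action `π s` only, the Bellman gap
`M s - RA s (π s) - E[M | s, π s]` makes `π` optimal, so by minimality this bonus costs at least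
as much as `R`. But the gap equals `R s (π s)` minus the excess `e s - E[e | s, π s]` of
`e = W - M`, and in a tree, where every state but the root is entered from a single parent and
the root from none, these excesses add up to at least `e s₀`. Hence `e s₀ ≤ 0`.
-/

open Finset

section AcyclicMDP

variable {S A : Type*}

def IsPolicy (act : S → Finset A) (σ : S → A) : Prop :=
  ∀ s, act s ≠ ∅ → σ s ∈ act s

def IsOptimal (act : S → Finset A) (V : (S → A) → (S → A → ℝ) → S → ℝ) (R : S → A → ℝ)
    (σ : S → A) : Prop :=
  ∀ σ', IsPolicy act σ' → ∀ s, V σ' R s ≤ V σ R s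

structure IsValueFunction [Fintype S] (act : S → Finset A) (P : S → A → S → ℝ)
    (V : (S → A) → (S → A → ℝ) → S → ℝ) : Prop where
  terminal : ∀ σ R s, act s = ∅ → V σ R s = 0
  step : ∀ σ R s, act s ≠ ∅ → V σ R s = R s (σ s) + ∑ t, P s (σ s) t * V σ R t

def gapBonus [Fintype S] [DecidableEq A] (act : S → Finset A) (P : S → A → S → ℝ)
    (R : S → A → ℝ) (W : S → ℝ) (π : S → A) (s : S) (a : A) : ℝ :=
  if act s ≠ ∅ ∧ a = π s then W s - (R s a + ∑ t, P s a t * W t) else 0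

variable [Fintype S] {act : S → Finset A} {P : S → A → S → ℝ} {rank : S → ℕ}
  {V : (S → A) → (S → A → ℝ) → S → ℝ}

theorem nonneg_of_superharmonic (hP0 : ∀ s a t, 0 ≤ P s a t)
    (hacyc : ∀ s, ∀ a ∈ act s, ∀ t, 0 < P s a t → rank t < rank s)
    {σ : S → A} (hσ : IsPolicy act σ) {G : S → ℝ} (hterm : ∀ s, act s = ∅ → 0 ≤ G s)
    (hstep : ∀ s, act s ≠ ∅ → ∑ t, P s (σ s) t * G t ≤ G s) (s : S) : 0 ≤ G s := by
  induction hn : rank s using Nat.strong_induction_on generalizing s with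
  | _ n ih =>
  by_cases hs : act s = ∅
  · exact hterm s hs
  refine (sum_nonneg fun t _ => ?_).trans (hstep s hs)
  rcases (hP0 s (σ s) t).eq_or_lt with hp | hp
  · simp [← hp]
  · exact mul_nonneg (hP0 _ _ _) (ih _ (hn ▸ hacyc s _ (hσ s hs) t hp) t rfl)

theorem value_le_of_superharmonic (hP0 : ∀ s a t, 0 ≤ P s a t)
    (hacyc : ∀ s, ∀ a ∈ act s, ∀ t, 0 < P s a t → rank t < rank s)
    (hV : IsValueFunction act P V) {σ : S → A} (hσ : IsPolicy act σ) {R : S → A → ℝ}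
    {F : S → ℝ} (hterm : ∀ s, act s = ∅ → 0 ≤ F s)
    (hstep : ∀ s, act s ≠ ∅ → R s (σ s) + ∑ t, P s (σ s) t * F t ≤ F s) (s : S) :
    V σ R s ≤ F s := by
  suffices 0 ≤ F s - V σ R s by linarith
  refine nonneg_of_superharmonic (G := fun s => F s - V σ R s) hP0 hacyc hσ (fun s hs => ?_)
    (fun s hs => ?_) s
  · simpa [hV.terminal σ R s hs] using hterm s hs
  · have := hstep s hs
    rw [hV.step σ R s hs]
    simp only [mul_sub, sum_sub_distrib]
    linarith

theorem le_value_of_subharmonic (hP0 : ∀ s a t, 0 ≤ P s a t)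
    (hacyc : ∀ s, ∀ a ∈ act s, ∀ t, 0 < P s a t → rank t < rank s)
    (hV : IsValueFunction act P V) {σ : S → A} (hσ : IsPolicy act σ) {R : S → A → ℝ}
    {F : S → ℝ} (hterm : ∀ s, act s = ∅ → F s ≤ 0)
    (hstep : ∀ s, act s ≠ ∅ → F s ≤ R s (σ s) + ∑ t, P s (σ s) t * F t) (s : S) :
    F s ≤ V σ R s := by
  suffices 0 ≤ V σ R s - F s by linarith
  refine nonneg_of_superharmonic (G := fun s => V σ R s - F s) hP0 hacyc hσ (fun s hs => ?_)
    (fun s hs => ?_) s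
  · simpa [hV.terminal σ R s hs] using hterm s hs
  · have := hstep s hs
    rw [hV.step σ R s hs]
    simp only [mul_sub, sum_sub_distrib]
    linarith

theorem value_mono (hP0 : ∀ s a t, 0 ≤ P s a t)
    (hacyc : ∀ s, ∀ a ∈ act s, ∀ t, 0 < P s a t → rank t < rank s)
    (hV : IsValueFunction act P V) {σ : S → A} (hσ : IsPolicy act σ) {R R' : S → A → ℝ}
    (hRR' : R ≤ R') (s : S) : V σ R s ≤ V σ R' s := by
  refine value_le_of_superharmonic hP0 hacyc hV hσ (fun s hs => (hV.terminal σ R' s hs).ge)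
    (fun s hs => ?_) s
  rw [hV.step σ R' s hs]
  gcongr
  exact hRR' s (σ s)

theorem bellman_of_isOptimal (hP0 : ∀ s a t, 0 ≤ P s a t)
    (hacyc : ∀ s, ∀ a ∈ act s, ∀ t, 0 < P s a t → rank t < rank s)
    (hV : IsValueFunction act P V) [DecidableEq S] {σ : S → A} {R : S → A → ℝ}
    (hσ : IsPolicy act σ) (hopt : IsOptimal act V R σ) {s : S} {a : A} (ha : a ∈ act s) :
    R s a + ∑ t, P s a t * V σ R t ≤ V σ R s := by
  by_contra! hlt
  have hs : act s ≠ ∅ := ne_empty_of_mem ha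
  set σ' := Function.update σ s a
  set F := Function.update (V σ R) s (R s a + ∑ t, P s a t * V σ R t)
  have hσ' : IsPolicy act σ' := fun u hu => by
    rcases eq_or_ne u s with rfl | hus
    · simpa [σ'] using ha
    · simpa [σ', hus] using hσ u hu
  have hVF : ∀ u, V σ R u ≤ F u := fun u => by
    rcases eq_or_ne u s with rfl | hus
    · simpa [F] using hlt.le
    · simp [F, hus]
  -- `F` is subharmonic for the deviation `σ'`, so `σ'` would beat `σ` at `s`.
  have hFσ' : F s ≤ V σ' R s := by
    refine le_value_of_subharmonic hP0 hacyc hV hσ' (fun u hu => ?_) (fun u hu => ?_) s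
    · have hus : u ≠ s := by rintro rfl; exact hs hu
      simp [F, hus, hV.terminal σ R u hu]
    · have hFu : F u ≤ R u (σ' u) + ∑ t, P u (σ' u) t * V σ R t := by
        rcases eq_or_ne u s with rfl | hus
        · simp [F, σ']
        · simp [F, σ', hus, ← hV.step σ R u hu]
      refine hFu.trans (add_le_add_right (sum_le_sum fun t _ => ?_) _)
      exact mul_le_mul_of_nonneg_left (hVF t) (hP0 _ _ _)
  have := hopt σ' hσ' s
  simp only [F, Function.update_self] at hFσ'
  linarith

section gapBonus

variable [DecidableEq A] {R : S → A → ℝ} {W : S → ℝ} {π : S → A}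

theorem gapBonus_nonneg (hπ : IsPolicy act π)
    (hW : ∀ s, ∀ a ∈ act s, R s a + ∑ t, P s a t * W t ≤ W s) (s : S) (a : A) :
    0 ≤ gapBonus act P R W π s a := by
  unfold gapBonus
  split_ifs with h
  · obtain ⟨hs, rfl⟩ := h
    linarith [hW s _ (hπ s hs)]
  · rfl

theorem isOptimal_add_gapBonus (hP0 : ∀ s a t, 0 ≤ P s a t)
    (hacyc : ∀ s, ∀ a ∈ act s, ∀ t, 0 < P s a t → rank t < rank s)
    (hV : IsValueFunction act P V) (hπ : IsPolicy act π)
    (hW : ∀ s, ∀ a ∈ act s, R s a + ∑ t, P s a t * W t ≤ W s)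
    (hW0 : ∀ s, act s = ∅ → W s = 0) :
    IsOptimal act V (R + gapBonus act P R W π) π := by
  intro σ hσ s
  have hσW : V σ (R + gapBonus act P R W π) s ≤ W s := by
    refine value_le_of_superharmonic hP0 hacyc hV hσ (fun u hu => (hW0 u hu).ge)
      (fun u hu => ?_) s
    by_cases hσπ : σ u = π u
    · simp [gapBonus, hu, hσπ]
      linarith
    · simpa [gapBonus, hu, hσπ] using hW u (σ u) (hσ u hu)
  have hWπ : W s ≤ V π (R + gapBonus act P R W π) s := by
    refine le_value_of_subharmonic hP0 hacyc hV hπ (fun u hu => (hW0 u hu).le)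
      (fun u hu => ?_) s
    simp [gapBonus, hu]
    linarith
  exact hσW.trans hWπ

theorem sum_gapBonus [Fintype A] :
    ∑ s, ∑ a, gapBonus act P R W π s a =
      ∑ s with act s ≠ ∅, (W s - (R s (π s) + ∑ t, P s (π s) t * W t)) := by
  rw [sum_filter]
  refine sum_congr rfl fun s _ => ?_
  simp [gapBonus, ite_and]

end gapBonus

/-- Every state other than the root receives total probability at most one, from its unique
parent, and the root receives none. -/
theorem le_sum_sub_expected_of_tree [DecidableEq S] [DecidableEq A] (s₀ : S)
    (hP0 : ∀ s a t, 0 ≤ P s a t)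
    (hP1 : ∀ s, ∀ a ∈ act s, ∑ t, P s a t = 1)
    (htree : ∀ t, t ≠ s₀ → ∃! s, ∃ a ∈ act s, 0 < P s a t)
    (hroot : ∀ s, ∀ a ∈ act s, P s a s₀ = 0) {σ : S → A} (hσ : IsPolicy act σ)
    {e : S → ℝ} (he : ∀ s, 0 ≤ e s) (hterm : ∀ s, act s = ∅ → e s = 0) :
    e s₀ ≤ ∑ s with act s ≠ ∅, (e s - ∑ t, P s (σ s) t * e t) := by
  set N := univ.filter fun s => act s ≠ ∅
  have hin_root : ∑ s ∈ N, P s (σ s) s₀ = 0 :=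
    sum_eq_zero fun s hs => hroot s _ (hσ s (mem_filter.1 hs).2)
  have hin_le : ∀ t ≠ s₀, ∑ s ∈ N, P s (σ s) t ≤ 1 := by
    intro t ht
    obtain ⟨u, -, hu⟩ := htree t ht
    have hzero : ∀ s ∈ N, s ≠ u → P s (σ s) t = 0 := fun s hs hsu =>
      ((hP0 _ _ _).eq_or_lt.resolve_right fun hp =>
        hsu (hu s ⟨σ s, hσ s (mem_filter.1 hs).2, hp⟩)).symm
    by_cases huN : act u = ∅
    · rw [sum_eq_zero fun s hs => hzero s hs (by rintro rfl; exact (mem_filter.1 hs).2 huN)]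
      exact zero_le_one
    · rw [sum_eq_single_of_mem u (by simpa [N] using huN) hzero, ← hP1 u _ (hσ u huN)]
      exact single_le_sum (fun t _ => hP0 u (σ u) t) (mem_univ t)
  have hinflow : ∑ s ∈ N, ∑ t, P s (σ s) t * e t ≤ ∑ t ∈ univ.erase s₀, e t := by
    rw [sum_comm, ← add_sum_erase _ _ (mem_univ s₀), ← sum_mul, hin_root, zero_mul, zero_add]
    refine sum_le_sum fun t ht => ?_
    rw [← sum_mul]
    exact mul_le_of_le_one_left (he t) (hin_le t (ne_of_mem_erase ht))
  have hsum : ∑ s ∈ N, e s = e s₀ + ∑ t ∈ univ.erase s₀, e t := by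
    rw [add_sum_erase _ _ (mem_univ s₀), sum_filter]
    exact sum_congr rfl fun s _ => ite_eq_left_iff.2 fun h => (hterm s (not_not.1 h)).symm
  rw [sum_sub_distrib]
  linarith

end AcyclicMDP

/-- in a stochastic tree, under a minimal implementation `R` of a policy `π`,
the agent's utility from the initial state with the bonus equals his optimal utility
without any bonus. -/
theorem stmt_7 {S A : Type} [Fintype S] [Fintype A] [DecidableEq S] [DecidableEq A]
    (s₀ : S) (act : S → Finset A)
    (P : S → A → S → ℝ)
    (hP0 : ∀ s a t, 0 ≤ P s a t)
    (hP1 : ∀ s, ∀ a ∈ act s, ∑ t, P s a t = 1)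
    (rank : S → ℕ)
    (hacyc : ∀ s, ∀ a ∈ act s, ∀ t, 0 < P s a t → rank t < rank s)
    (htree : ∀ t, t ≠ s₀ → ∃! s, ∃ a ∈ act s, 0 < P s a t)
    (hroot : ∀ s, ∀ a ∈ act s, P s a s₀ = 0)
    (V : (S → A) → (S → A → ℝ) → S → ℝ)
    (hVterm : ∀ (π : S → A) (R : S → A → ℝ) (s : S), act s = ∅ → V π R s = 0)
    (hVrec : ∀ (π : S → A) (R : S → A → ℝ) (s : S), act s ≠ ∅ →
      V π R s = R s (π s) + ∑ t, P s (π s) t * V π R t)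
    (RA : S → A → ℝ)
    (πA : S → A) (hπA : ∀ s, act s ≠ ∅ → πA s ∈ act s)
    (hπAopt : ∀ π : S → A, (∀ s, act s ≠ ∅ → π s ∈ act s) → ∀ s, V π RA s ≤ V πA RA s)
    (π : S → A) (hπ : ∀ s, act s ≠ ∅ → π s ∈ act s)
    (R : S → A → ℝ) (hR0 : ∀ s a, 0 ≤ R s a)
    (hRimpl : ∀ π' : S → A, (∀ s, act s ≠ ∅ → π' s ∈ act s) → ∀ s,
      V π' (fun s b => RA s b + R s b) s ≤ V π (fun s b => RA s b + R s b) s)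
    (hRmin : ∀ R' : S → A → ℝ, (∀ s a, 0 ≤ R' s a) →
      (∀ π' : S → A, (∀ s, act s ≠ ∅ → π' s ∈ act s) → ∀ s,
        V π' (fun s b => RA s b + R' s b) s ≤ V π (fun s b => RA s b + R' s b) s) →
      (∑ s, ∑ a, R s a) ≤ ∑ s, ∑ a, R' s a) :
    V π (fun s b => RA s b + R s b) s₀ = V πA RA s₀ := by
  have hV : IsValueFunction act P V := ⟨hVterm, hVrec⟩
  set M := V πA RA
  set W := V π (fun s b => RA s b + R s b)
  have hM : ∀ s, ∀ a ∈ act s, RA s a + ∑ t, P s a t * M t ≤ M s :=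
    fun s a ha => bellman_of_isOptimal hP0 hacyc hV hπA hπAopt ha
  have hMW : ∀ s, M s ≤ W s := fun s =>
    (value_mono hP0 hacyc hV hπA (fun s a => le_add_of_nonneg_right (hR0 s a)) s).trans
      (hRimpl πA hπA s)
  have hcost := hRmin _ (gapBonus_nonneg hπ hM)
    (isOptimal_add_gapBonus hP0 hacyc hV hπ hM (hVterm πA RA))
  have hexcess := le_sum_sub_expected_of_tree s₀ hP0 hP1 htree hroot hπ (e := W - M)
    (fun s => sub_nonneg.2 (hMW s)) (fun s hs => by simp [W, M, hVterm _ _ s hs])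
  have hgap : ∀ s, act s ≠ ∅ →
      (W - M) s - ∑ t, P s (π s) t * (W - M) t =
        R s (π s) - (M s - (RA s (π s) + ∑ t, P s (π s) t * M t)) := fun s hs => by
    simp only [Pi.sub_apply, mul_sub, sum_sub_distrib, W, hVrec π _ s hs]
    ring
  have hpath : ∑ s with act s ≠ ∅, R s (π s) ≤ ∑ s, ∑ a, R s a :=
    (sum_le_sum fun s _ => single_le_sum (fun a _ => hR0 s a) (mem_univ (π s))).trans
      (sum_le_sum_of_subset_of_nonneg (filter_subset _ _) fun s _ _ =>
        sum_nonneg fun a _ => hR0 s a)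
  have hW_le : W s₀ - M s₀ ≤ 0 := calc
    W s₀ - M s₀ ≤ ∑ s with act s ≠ ∅, ((W - M) s - ∑ t, P s (π s) t * (W - M) t) := hexcess
    _ = ∑ s with act s ≠ ∅, R s (π s) - ∑ s, ∑ a, gapBonus act P RA M π s a := by
      rw [sum_congr rfl fun s hs => hgap s (mem_filter.1 hs).2, sum_sub_distrib, sum_gapBonus]
    _ ≤ ∑ s, ∑ a, R s a - ∑ s, ∑ a, gapBonus act P RA M π s a := by gcongr
    _ ≤ 0 := sub_nonpos.2 hcost
  exact le_antisymm (by linarith) (hMW s₀)
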